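/- Fix a real number T > 0 and an integer n ≥ 1. Let a = (a_1,…,a_n) and b = (b_1,…,b_n) be tuples of bounded measurable functions [0,T] → ℂ such that ∫_0^T a_i(s) ds = 0 for every 1 ≤ i ≤ n. Then every moment is additive on the concatenation: m^{n_1,…,n_j}_{i_1,…,i_{j+1}}(a*b) = m^{n_1,…,n_j}_{i_1,…,i_{j+1}}(a) + m^{n_1,…,n_j}_{i_1,…,i_{j+1}}(b) for all j ≥ 0, all positive integers n_1,…,n_j and all indices i_1,…,i_{j+1} ∈ {1,…,n}. -/
import Mathlib


open MeasureTheory Set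

noncomputable section

/-- Iterated integral over the simplex `0 ≤ s₁ ≤ … ≤ s_m ≤ x`; the head of the
list is attached to the outermost (largest) variable. -/
def simplexInt : List (ℝ → ℂ) → ℝ → ℂ
  | [] => fun _ => 1
  | f :: fs => fun x => ∫ s in (0:ℝ)..x, f s * simplexInt fs s

/-- The basic iterated integral `I_{i₁,…,i_m}(a)`. -/
def iterInt (T : ℝ) {n : ℕ} (a : Fin n → ℝ → ℂ) (l : List (Fin n)) : ℂ :=
  simplexInt ((l.map a).reverse) T

/-- `ã(x) = ∫_0^x a(s) ds`. -/
def primitive (a : ℝ → ℂ) (x : ℝ) : ℂ := ∫ s in (0:ℝ)..x, a s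

/-- The moment `m^{n₁,…,n_j}_{i₁,…,i_{j+1}}(a)`, encoded by the list
`ps = [(i₁,n₁),…,(i_j,n_j)]` of index/exponent pairs and the final index `i`. -/
def moment (T : ℝ) {n : ℕ} (a : Fin n → ℝ → ℂ) (ps : List (Fin n × ℕ)) (i : Fin n) : ℂ :=
  ∫ s in (0:ℝ)..T, (ps.map fun q => primitive (a q.1) s ^ q.2).prod * a i s

/-- Concatenation `a*b` of two coefficient functions. -/
def concatF (T : ℝ) (f g : ℝ → ℂ) : ℝ → ℂ :=
  fun t => if t ≤ T / 2 then 2 * f (2 * t) else 2 * g (2 * t - T)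

/-- Inverse `a^{-1}` of a coefficient function. -/
def invF (T : ℝ) (f : ℝ → ℂ) : ℝ → ℂ := fun t => -f (T - t)

/-! ### Auxiliary lemmas -/

lemma measurable_concatF {T : ℝ} {f g : ℝ → ℂ} (hf : Measurable f) (hg : Measurable g) :
    Measurable (concatF T f g) := by
  unfold concatF
  refine Measurable.ite (measurableSet_le measurable_id measurable_const) ?_ ?_
  · exact measurable_const.mul (hf.comp (measurable_id.const_mul 2))
  · exact measurable_const.mul (hg.comp ((measurable_id.const_mul 2).sub measurable_const))

lemma bound_concatF {T : ℝ} {f g : ℝ → ℂ} {Cf Cg : ℝ}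
    (hbf : ∀ x ∈ Icc (0:ℝ) T, ‖f x‖ ≤ Cf) (hbg : ∀ x ∈ Icc (0:ℝ) T, ‖g x‖ ≤ Cg) :
    ∀ t ∈ Icc (0:ℝ) T, ‖concatF T f g t‖ ≤ 2 * max Cf Cg := by
  intro t ht
  unfold concatF
  by_cases h : t ≤ T / 2
  · rw [if_pos h]
    have h2t : (2:ℝ) * t ∈ Icc (0:ℝ) T := ⟨by linarith [ht.1], by linarith⟩
    have : ‖(2:ℂ) * f (2 * t)‖ = 2 * ‖f (2 * t)‖ := by
      rw [norm_mul]; norm_num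
    rw [this]
    have := hbf _ h2t
    have hle : ‖f (2*t)‖ ≤ max Cf Cg := le_trans this (le_max_left _ _)
    linarith
  · rw [if_neg h]
    push_neg at h
    have h2t : (2:ℝ) * t - T ∈ Icc (0:ℝ) T := ⟨by linarith, by linarith [ht.2]⟩
    have : ‖(2:ℂ) * g (2 * t - T)‖ = 2 * ‖g (2 * t - T)‖ := by
      rw [norm_mul]; norm_num
    rw [this]
    have := hbg _ h2t
    have hle : ‖g (2*t - T)‖ ≤ max Cf Cg := le_trans this (le_max_right _ _)
    linarith

lemma integrableOn_of_bound {T u v : ℝ} {f : ℝ → ℂ} (hf : Measurable f) {C : ℝ}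
    (hb : ∀ x ∈ Icc (0:ℝ) T, ‖f x‖ ≤ C) (h0 : 0 ≤ u) (huv : u ≤ v) (hvT : v ≤ T) :
    IntegrableOn f (Icc u v) := by
  refine ⟨hf.aestronglyMeasurable.restrict,
    HasFiniteIntegral.restrict_of_bounded (C := C) measure_Icc_lt_top ?_⟩
  filter_upwards [ae_restrict_mem measurableSet_Icc] with x hx
  exact hb x ⟨le_trans h0 hx.1, le_trans hx.2 hvT⟩

lemma intervalIntegrable_of_bound {T u v : ℝ} {f : ℝ → ℂ} (hf : Measurable f) {C : ℝ}
    (hb : ∀ x ∈ Icc (0:ℝ) T, ‖f x‖ ≤ C) (h0 : 0 ≤ u) (huv : u ≤ v) (hvT : v ≤ T) :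
    IntervalIntegrable f volume u v := by
  have := integrableOn_of_bound hf hb h0 huv hvT
  rw [← uIcc_of_le huv] at this
  exact this.intervalIntegrable

lemma intervalIntegrable_mul_of_bound {T u v : ℝ} {P f : ℝ → ℂ} (hT : 0 ≤ T)
    (hP : ContinuousOn P (Icc 0 T)) (hf : Measurable f) {C : ℝ}
    (hb : ∀ x ∈ Icc (0:ℝ) T, ‖f x‖ ≤ C) (h0 : 0 ≤ u) (huv : u ≤ v) (hvT : v ≤ T) :
    IntervalIntegrable (fun s => P s * f s) volume u v := by
  obtain ⟨D, hD⟩ := isCompact_Icc.exists_bound_of_continuousOn hP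
  have hsub : Icc u v ⊆ Icc (0:ℝ) T := Icc_subset_Icc h0 hvT
  have hD0 : 0 ≤ D := le_trans (norm_nonneg _) (hD 0 ⟨le_refl _, hT⟩)
  have asm : AEStronglyMeasurable (fun s => P s * f s) (volume.restrict (Icc u v)) := by
    refine AEStronglyMeasurable.mul ?_ hf.aestronglyMeasurable.restrict
    exact (hP.mono hsub).aestronglyMeasurable measurableSet_Icc
  have hio : IntegrableOn (fun s => P s * f s) (Icc u v) := by
    refine ⟨asm, HasFiniteIntegral.restrict_of_bounded (C := D * C) measure_Icc_lt_top ?_⟩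
    filter_upwards [ae_restrict_mem measurableSet_Icc] with x hx
    have hx' := hsub hx
    calc ‖P x * f x‖ = ‖P x‖ * ‖f x‖ := norm_mul _ _
      _ ≤ D * C := mul_le_mul (hD x hx') (hb x hx') (norm_nonneg _) hD0
  rw [← uIcc_of_le huv] at hio
  exact hio.intervalIntegrable

lemma half_subst (F : ℝ → ℂ) (T : ℝ) :
    (∫ s in (0:ℝ)..T/2, (2:ℂ) * F (2*s)) = ∫ u in (0:ℝ)..T, F u := by
  rw [intervalIntegral.integral_const_mul, intervalIntegral.integral_comp_mul_left F two_ne_zero]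
  have h1 : (2:ℝ) * (T/2) = T := by ring
  rw [mul_zero, h1]
  simp only [Complex.real_smul, Complex.ofReal_inv, Complex.ofReal_ofNat]
  ring

lemma half_subst2 (F : ℝ → ℂ) (T : ℝ) :
    (∫ s in (T/2)..T, (2:ℂ) * F (2*s - T)) = ∫ u in (0:ℝ)..T, F u := by
  rw [intervalIntegral.integral_const_mul,
    intervalIntegral.integral_comp_mul_sub F two_ne_zero T]
  have h1 : (2:ℝ) * (T/2) - T = 0 := by ring
  have h2 : (2:ℝ) * T - T = T := by ring
  rw [h1, h2]
  simp only [Complex.real_smul, Complex.ofReal_inv, Complex.ofReal_ofNat]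
  ring

lemma primitive_concatF_left {T : ℝ} {f g : ℝ → ℂ} {y : ℝ} (h0 : 0 ≤ y) (hy : y ≤ T/2) :
    primitive (concatF T f g) y = primitive f (2*y) := by
  have hcongr : (∫ s in (0:ℝ)..y, concatF T f g s) = ∫ s in (0:ℝ)..y, (2:ℂ) * f (2*s) := by
    apply intervalIntegral.integral_congr
    intro s hs
    rw [uIcc_of_le h0] at hs
    have hsle : s ≤ T/2 := le_trans hs.2 hy
    simp [concatF, hsle]
  rw [primitive, hcongr, intervalIntegral.integral_const_mul,
    intervalIntegral.integral_comp_mul_left f two_ne_zero, mul_zero]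
  rw [primitive]
  simp only [Complex.real_smul, Complex.ofReal_inv, Complex.ofReal_ofNat]
  ring

lemma primitive_concatF {T : ℝ} (hT : 0 < T) {f g : ℝ → ℂ}
    (hf : Measurable f) (hg : Measurable g) {Cf Cg : ℝ}
    (hbf : ∀ x ∈ Icc (0:ℝ) T, ‖f x‖ ≤ Cf) (hbg : ∀ x ∈ Icc (0:ℝ) T, ‖g x‖ ≤ Cg)
    (hmean : (∫ s in (0:ℝ)..T, f s) = 0) {x : ℝ} (hx : x ∈ Icc (0:ℝ) T) :
    primitive (concatF T f g) x =
      if x ≤ T/2 then primitive f (2*x) else primitive g (2*x - T) := by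
  by_cases h : x ≤ T/2
  · rw [if_pos h]
    exact primitive_concatF_left hx.1 h
  · rw [if_neg h]
    push_neg at h
    have hbc := bound_concatF hbf hbg
    have hmc := measurable_concatF (T := T) hf hg
    have hI1 : IntervalIntegrable (concatF T f g) volume 0 (T/2) :=
      intervalIntegrable_of_bound hmc hbc le_rfl (by linarith) (by linarith [hx.2])
    have hI2 : IntervalIntegrable (concatF T f g) volume (T/2) x :=
      intervalIntegrable_of_bound hmc hbc (by linarith) h.le hx.2
    have hsplit : primitive (concatF T f g) x =
        (∫ s in (0:ℝ)..T/2, concatF T f g s) + ∫ s in (T/2)..x, concatF T f g s := by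
      rw [primitive, ← intervalIntegral.integral_add_adjacent_intervals hI1 hI2]
    have hfirst : (∫ s in (0:ℝ)..T/2, concatF T f g s) = 0 := by
      have := primitive_concatF_left (f := f) (g := g) (T := T) (y := T/2)
        (by linarith) le_rfl
      rw [primitive] at this
      rw [this]
      have h1 : (2:ℝ) * (T/2) = T := by ring
      rw [primitive, h1, hmean]
    have hsecond : (∫ s in (T/2)..x, concatF T f g s) = primitive g (2*x - T) := by
      have hcongr : (∫ s in (T/2)..x, concatF T f g s) =
          ∫ s in (T/2)..x, (2:ℂ) * g (2*s - T) := by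
        apply intervalIntegral.integral_congr_ae
        apply Filter.Eventually.of_forall
        intro s hs
        rw [uIoc_of_le h.le] at hs
        have : ¬ s ≤ T/2 := not_le.mpr hs.1
        simp [concatF, this]
      rw [hcongr, intervalIntegral.integral_const_mul,
        intervalIntegral.integral_comp_mul_sub g two_ne_zero T]
      have h1 : (2:ℝ) * (T/2) - T = 0 := by ring
      rw [h1, primitive]
      simp only [Complex.real_smul, Complex.ofReal_inv, Complex.ofReal_ofNat]
      ring
    rw [hsplit, hfirst, hsecond, zero_add]

lemma continuousOn_prodPrim {T : ℝ} (hT : 0 ≤ T) {n : ℕ} (c : Fin n → ℝ → ℂ)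
    (hint : ∀ j, IntegrableOn (c j) (Icc (0:ℝ) T)) (ps : List (Fin n × ℕ)) :
    ContinuousOn (fun s => (ps.map fun q => primitive (c q.1) s ^ q.2).prod) (Icc (0:ℝ) T) := by
  induction ps with
  | nil => simpa using continuousOn_const
  | cons q ps ih =>
      simp only [List.map_cons, List.prod_cons]
      refine ContinuousOn.mul (ContinuousOn.pow ?_ _) ih
      have : ContinuousOn (fun x => ∫ t in (0:ℝ)..x, c q.1 t) (uIcc (0:ℝ) T) := by
        apply intervalIntegral.continuousOn_primitive_interval
        rw [uIcc_of_le hT]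
        exact hint q.1
      rw [uIcc_of_le hT] at this
      exact this

/-- **Section 2.3.**  If the components of `a` have zero mean on `[0,T]`, then every
moment is additive on the concatenation: `m(a*b) = m(a) + m(b)`. -/
theorem moment_additive_on_concat
    (T : ℝ) (hT : 0 < T) (n : ℕ) (hn : 1 ≤ n)
    (a b : Fin n → ℝ → ℂ)
    (hma : ∀ i, Measurable (a i)) (hmb : ∀ i, Measurable (b i))
    (hba : ∃ C : ℝ, ∀ i, ∀ x ∈ Icc (0:ℝ) T, ‖a i x‖ ≤ C)
    (hbb : ∃ C : ℝ, ∀ i, ∀ x ∈ Icc (0:ℝ) T, ‖b i x‖ ≤ C)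
    (hmean : ∀ i, (∫ s in (0:ℝ)..T, a i s) = 0) :
    ∀ (ps : List (Fin n × ℕ)), (∀ q ∈ ps, 0 < q.2) → ∀ i : Fin n,
      moment T (fun i => concatF T (a i) (b i)) ps i =
        moment T a ps i + moment T b ps i := by
  intro ps _ i
  obtain ⟨Ca, hCa⟩ := hba
  obtain ⟨Cb, hCb⟩ := hbb
  set c : Fin n → ℝ → ℂ := fun j => concatF T (a j) (b j) with hc
  have hmc : ∀ j, Measurable (c j) := fun j => measurable_concatF (hma j) (hmb j)
  have hbc : ∀ j, ∀ t ∈ Icc (0:ℝ) T, ‖c j t‖ ≤ 2 * max Ca Cb :=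
    fun j => bound_concatF (hCa j) (hCb j)
  have hintc : ∀ j, IntegrableOn (c j) (Icc (0:ℝ) T) :=
    fun j => integrableOn_of_bound (hmc j) (hbc j) le_rfl hT.le le_rfl
  set Pc : ℝ → ℂ := fun s => (ps.map fun q => primitive (c q.1) s ^ q.2).prod with hPc
  have hPcont : ContinuousOn Pc (Icc (0:ℝ) T) := continuousOn_prodPrim hT.le c hintc ps
  have hI1 : IntervalIntegrable (fun s => Pc s * c i s) volume 0 (T/2) :=
    intervalIntegrable_mul_of_bound hT.le hPcont (hmc i) (hbc i)
      le_rfl (by linarith) (by linarith)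
  have hI2 : IntervalIntegrable (fun s => Pc s * c i s) volume (T/2) T :=
    intervalIntegrable_mul_of_bound hT.le hPcont (hmc i) (hbc i)
      (by linarith) (by linarith) le_rfl
  have hprim : ∀ j, ∀ x ∈ Icc (0:ℝ) T, primitive (c j) x =
      if x ≤ T/2 then primitive (a j) (2*x) else primitive (b j) (2*x - T) :=
    fun j x hx => primitive_concatF hT (hma j) (hmb j) (hCa j) (hCb j) (hmean j) hx
  have hsplit : moment T c ps i =
      (∫ s in (0:ℝ)..T/2, Pc s * c i s) + ∫ s in (T/2)..T, Pc s * c i s := by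
    rw [moment, ← intervalIntegral.integral_add_adjacent_intervals hI1 hI2]
  have hfirst : (∫ s in (0:ℝ)..T/2, Pc s * c i s) = moment T a ps i := by
    have hcongr : (∫ s in (0:ℝ)..T/2, Pc s * c i s) =
        ∫ s in (0:ℝ)..T/2, (2:ℂ) *
          ((ps.map fun q => primitive (a q.1) (2*s) ^ q.2).prod * a i (2*s)) := by
      apply intervalIntegral.integral_congr_ae
      apply Filter.Eventually.of_forall
      intro s hs
      rw [uIoc_of_le (by linarith : (0:ℝ) ≤ T/2)] at hs
      have hsT : s ∈ Icc (0:ℝ) T := ⟨hs.1.le, by linarith [hs.2]⟩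
      have hsle : s ≤ T/2 := hs.2
      have hPeq : Pc s = (ps.map fun q => primitive (a q.1) (2*s) ^ q.2).prod := by
        show (List.map (fun q => primitive (c q.1) s ^ q.2) ps).prod = _
        congr 1
        apply List.map_congr_left
        intro q _
        rw [hprim q.1 s hsT, if_pos hsle]
      have hceq : c i s = 2 * a i (2*s) := by
        simp [hc, concatF, hsle]
      rw [hPeq, hceq]
      ring
    rw [hcongr,
      half_subst (fun u => (ps.map fun q => primitive (a q.1) u ^ q.2).prod * a i u) T]
    rfl
  have hsecond : (∫ s in (T/2)..T, Pc s * c i s) = moment T b ps i := by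
    have hcongr : (∫ s in (T/2)..T, Pc s * c i s) =
        ∫ s in (T/2)..T, (2:ℂ) *
          ((ps.map fun q => primitive (b q.1) (2*s - T) ^ q.2).prod * b i (2*s - T)) := by
      apply intervalIntegral.integral_congr_ae
      apply Filter.Eventually.of_forall
      intro s hs
      rw [uIoc_of_le (by linarith : T/2 ≤ T)] at hs
      have hsT : s ∈ Icc (0:ℝ) T := ⟨by linarith [hs.1], hs.2⟩
      have hsle : ¬ s ≤ T/2 := not_le.mpr hs.1
      have hPeq : Pc s = (ps.map fun q => primitive (b q.1) (2*s - T) ^ q.2).prod := by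
        show (List.map (fun q => primitive (c q.1) s ^ q.2) ps).prod = _
        congr 1
        apply List.map_congr_left
        intro q _
        rw [hprim q.1 s hsT, if_neg hsle]
      have hceq : c i s = 2 * b i (2*s - T) := by
        simp [hc, concatF, hsle]
      rw [hPeq, hceq]
      ring
    rw [hcongr,
      half_subst2 (fun u => (ps.map fun q => primitive (b q.1) u ^ q.2).prod * b i u) T]
    rfl
  rw [hsplit, hfirst, hsecond]

end
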